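/- arXiv:2201.01497 — 6 statements merged into one kernel-verified Lean document; each statement's English description precedes it below -/
import Mathlib

section
/- Let C be an ideal of FH, written C = FH·e with e an idempotent of FH. Then the orthogonal complement of C in FH is C^⊥ = FH·(1 − ē). In particular: if ē = e then C is an LCD code (C ∩ C^⊥ = 0), and if e·ē = 0 then C is self-orthogonal (C ⊆ C^⊥). -/
/-! The inner product is compatible with multiplication up to the bar map:
`⟨a, b c⟩ = ⟨a c̄, b⟩`. Testing against the elements `x^i e`, which span `C = FH·e`, therefore
identifies `C^⊥` with the annihilator of `ē`, and since `ē` is again idempotent that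
annihilator is `FH·(1 − ē)`. -/

noncomputable section

/-- The cyclic group of order `n`, written multiplicatively. -/
abbrev Zn (n : ℕ) := Multiplicative (ZMod n)

/-- The group algebra `FH` of the cyclic group of order `n` over `F`. -/
abbrev FH (F : Type*) [Field F] (n : ℕ) := MonoidAlgebra F (Zn n)

variable {F : Type*} [Field F] [Fintype F] {n : ℕ} [NeZero n]

/-- The "bar" map of the group algebra, induced by `x ↦ x⁻¹`. -/
def bar (a : FH F n) : FH F n :=
  MonoidAlgebra.ofCoeff (Finsupp.equivMapDomain (Equiv.inv (Zn n)) a.coeff)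

/-- The inner product on `FH`: `⟨a, b⟩ = ∑ a_g * b_g`. -/
def innerFH (a b : FH F n) : F := ∑ g : Zn n, a.coeff g * b.coeff g

/-- The inner product on `FH × FH`. -/
def innerFH2 (a b : FH F n × FH F n) : F := innerFH a.1 b.1 + innerFH a.2 b.2

/-- `Ĉ₁₂ = {(c, c·g) : c ∈ C12}` as an `FH`-submodule of `FH × FH`. -/
def hatSub (C12 : Ideal (FH F n)) (g : FH F n) : Submodule (FH F n) (FH F n × FH F n) :=
  Submodule.map (LinearMap.prod LinearMap.id (LinearMap.mulRight (FH F n) g)) C12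

/-- A 2-quasi-cyclic code (an `FH`-submodule of `FH × FH`) is self-dual if it
equals its orthogonal complement. -/
def IsSelfDual (C : Submodule (FH F n) (FH F n × FH F n)) : Prop :=
  (C : Set (FH F n × FH F n)) = {v | ∀ c ∈ C, innerFH2 v c = 0}

/-- A 2-quasi-cyclic code is a dihedral code iff it is invariant under
`(a, a') ↦ (ā', ā)` (left multiplication by `y` in the dihedral group algebra). -/
def IsDihedral (C : Submodule (FH F n) (FH F n × FH F n)) : Prop :=
  ∀ p ∈ C, (bar p.2, bar p.1) ∈ C

/-- A 2-quasi-cyclic code is a consta-dihedral code iff it is invariant under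
`(a, a') ↦ (−ā', ā)` (left multiplication by `ỹ` in the consta-dihedral algebra). -/
def IsConstaDihedral (C : Submodule (FH F n) (FH F n × FH F n)) : Prop :=
  ∀ p ∈ C, (-(bar p.2), bar p.1) ∈ C

namespace IsIdempotentElem

variable {R : Type*} [CommRing R] {e x : R}

theorem mul_eq_zero_iff_mem_span_one_sub (he : IsIdempotentElem e) :
    x * e = 0 ↔ x ∈ Ideal.span {1 - e} := by
  rw [← he.ker_toSpanSingleton_eq_span, LinearMap.mem_ker, LinearMap.toSpanSingleton_apply,
    smul_eq_mul]

theorem mul_eq_self_of_mem_span (he : IsIdempotentElem e) (hx : x ∈ Ideal.span {e}) :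
    x * e = x := by
  obtain ⟨d, rfl⟩ := Ideal.mem_span_singleton'.mp hx
  rw [mul_assoc, he.eq]

end IsIdempotentElem

theorem MonoidAlgebra.coeff_mul_eq_sum {k G : Type*} [Semiring k] [Group G] [Fintype G]
    (f g : MonoidAlgebra k G) (x : G) :
    (f * g).coeff x = ∑ h : G, f.coeff h * g.coeff (h⁻¹ * x) := by
  rw [coeff_mul_apply_left, Finsupp.sum_fintype]
  simp

section GroupAlgebra

variable {F : Type*} [Field F] {n : ℕ}

theorem coeff_bar (a : FH F n) (g : Zn n) : (bar a).coeff g = a.coeff g⁻¹ := rfl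

theorem bar_eq_domCongr (a : FH F n) :
    bar a = MonoidAlgebra.domCongr F F (MulEquiv.inv (Zn n)) a := by
  ext g
  rw [MonoidAlgebra.coeff_domCongr]
  rfl

theorem bar_mul (a b : FH F n) : bar (a * b) = bar a * bar b := by
  simp only [bar_eq_domCongr, map_mul]

theorem IsIdempotentElem.bar {e : FH F n} (he : IsIdempotentElem e) :
    IsIdempotentElem (bar e) := by
  rw [IsIdempotentElem, ← bar_mul, he.eq]

variable [NeZero n]

theorem innerFH_zero_left (b : FH F n) : innerFH 0 b = 0 := by
  simp [innerFH]

theorem innerFH_single_one_right (a : FH F n) (g : Zn n) :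
    innerFH a (MonoidAlgebra.single g 1) = a.coeff g := by
  simp [innerFH, Finsupp.single_apply]

theorem innerFH_mul_right (a b c : FH F n) : innerFH a (b * c) = innerFH (a * bar c) b := by
  simp only [innerFH, MonoidAlgebra.coeff_mul_eq_sum, coeff_bar, Finset.mul_sum,
    Finset.sum_mul]
  rw [Finset.sum_comm]
  refine Finset.sum_congr rfl fun h _ => Finset.sum_congr rfl fun g _ => ?_
  rw [show (g⁻¹ * h)⁻¹ = h⁻¹ * g by group]
  ring

theorem forall_innerFH_span_singleton_eq_zero_iff (a e : FH F n) :
    (∀ c ∈ Ideal.span {e}, innerFH a c = 0) ↔ a * bar e = 0 := by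
  refine ⟨fun h => ?_, fun h c hc => ?_⟩
  · ext g
    have hg := h _ (Ideal.mul_mem_left _ (MonoidAlgebra.single g 1)
      (Ideal.mem_span_singleton_self e))
    rwa [innerFH_mul_right, innerFH_single_one_right] at hg
  · obtain ⟨d, rfl⟩ := Ideal.mem_span_singleton'.mp hc
    rw [innerFH_mul_right, h, innerFH_zero_left]

end GroupAlgebra

theorem dual_of_span_idempotent_general (F : Type*) [Field F] (n : ℕ) [NeZero n]
    (e : FH F n) (he : IsIdempotentElem e) :
    {a : FH F n | ∀ c ∈ (Ideal.span {e} : Ideal (FH F n)), innerFH a c = 0}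
      = ((Ideal.span {1 - bar e} : Ideal (FH F n)) : Set (FH F n)) ∧
    (bar e = e →
      ((Ideal.span {e} : Ideal (FH F n)) : Set (FH F n)) ∩
        {a : FH F n | ∀ c ∈ (Ideal.span {e} : Ideal (FH F n)), innerFH a c = 0} = {0}) ∧
    (e * bar e = 0 →
      ((Ideal.span {e} : Ideal (FH F n)) : Set (FH F n)) ⊆
        {a : FH F n | ∀ c ∈ (Ideal.span {e} : Ideal (FH F n)), innerFH a c = 0}) := by
  have hdual : {a : FH F n | ∀ c ∈ Ideal.span {e}, innerFH a c = 0} = {a | a * bar e = 0} :=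
    Set.ext fun a => forall_innerFH_span_singleton_eq_zero_iff a e
  rw [hdual]
  refine ⟨Set.ext fun a => he.bar.mul_eq_zero_iff_mem_span_one_sub, fun hbar => ?_, ?_⟩
  · refine Set.eq_singleton_iff_unique_mem.mpr ⟨⟨Ideal.zero_mem _, zero_mul _⟩, ?_⟩
    rintro x ⟨hx, hxe⟩
    rwa [Set.mem_ofPred_eq, hbar, he.mul_eq_self_of_mem_span hx] at hxe
  · intro hebar x hx
    obtain ⟨d, rfl⟩ := Ideal.mem_span_singleton'.mp hx
    rw [Set.mem_ofPred_eq, mul_assoc, hebar, mul_zero]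

/-- For `C = FH·e` with `e` idempotent: `C^⊥ = FH·(1 − ē)`; in particular, if
`ē = e` then `C` is LCD (`C ∩ C^⊥ = 0`), and if `e·ē = 0` then `C` is
self-orthogonal (`C ⊆ C^⊥`). -/
theorem dual_of_span_idempotent (F : Type*) [Field F] [Fintype F] (n : ℕ) [NeZero n]
    (hn : 1 < n) (hcop : Nat.Coprime n (Fintype.card F))
    (e : FH F n) (he : IsIdempotentElem e) :
    {a : FH F n | ∀ c ∈ (Ideal.span {e} : Ideal (FH F n)), innerFH a c = 0}
      = ((Ideal.span {1 - bar e} : Ideal (FH F n)) : Set (FH F n)) ∧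
    (bar e = e →
      ((Ideal.span {e} : Ideal (FH F n)) : Set (FH F n)) ∩
        {a : FH F n | ∀ c ∈ (Ideal.span {e} : Ideal (FH F n)), innerFH a c = 0} = {0}) ∧
    (e * bar e = 0 →
      ((Ideal.span {e} : Ideal (FH F n)) : Set (FH F n)) ⊆
        {a : FH F n | ∀ c ∈ (Ideal.span {e} : Ideal (FH F n)), innerFH a c = 0}) :=
  dual_of_span_idempotent_general F n e he
end
end

section
/- A subset C ⊆ FH × FH is an FH-submodule of FH × FH if and only if there exist ideals C1, C2, C12 of FH with C1 ∩ C12 = 0 = C2 ∩ C12, and an element g ∈ C12 that is invertible in the ring C12 (i.e., g·h = e_{C12} for some h ∈ C12, where e_{C12} is the idempotent with C12 = FH·e_{C12} acting as identity on C12), such that C = {(c1 + c, c2 + c·g) : c1 ∈ C1, c2 ∈ C2, c ∈ C12}; moreover this decomposition is direct: C = (C1 × C2) ⊕ Ĉ12 where Ĉ12 = {(c, c·g) : c ∈ C12}. -/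
noncomputable section

variable {F : Type*} [Field F] [Fintype F] {n : ℕ} [NeZero n]

/-!
Let `C1 = {a : (a, 0) ∈ C}` and let `C12` be a complement of `C1` inside the first projection
of `C`; in a semisimple ring such complements exist and `C12 = (e)` for an idempotent `e`.
If `(e, m) ∈ C` then `g = e * m` satisfies `(c, c * g) ∈ C` for all `c ∈ C12`, and `c ↦ c * g`
is injective on `C12` because `C1 ∩ C12 = 0`. As `C12` is Artinian it is also surjective, which
yields the inverse `h` of `g` in `C12` and `C2 ∩ C12 = 0` for `C2 = {a : (0, a) ∈ C}`.
Subtracting `(c1, 0) + (c, c * g)` from an element of `C` leaves an element of `0 × C2`.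
-/

section

open LinearMap

variable {R : Type*} [CommRing R]

theorem IsIdempotentElem.mul_eq_self_of_mem_span_s5 {e c : R} (he : IsIdempotentElem e)
    (hc : c ∈ Ideal.span {e}) : e * c = c := by
  obtain ⟨r, rfl⟩ := Ideal.mem_span_singleton'.mp hc
  rw [mul_left_comm, he.eq]

theorem Ideal.exists_mul_eq_of_mul_right_injOn [IsArtinianRing R] {I : Ideal R} {g : R}
    (hinj : ∀ c ∈ I, c * g = 0 → c = 0) {a : R} (ha : a ∈ I) : ∃ c ∈ I, c * g = a := by
  let f : I →ₗ[R] I := (mulRight R g).restrict fun c hc => I.mul_mem_right g hc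
  have hf : Function.Injective f := by
    rw [← LinearMap.ker_eq_bot, LinearMap.ker_eq_bot']
    exact fun c hc => Subtype.ext (hinj c c.2 (congrArg Subtype.val hc))
  obtain ⟨c, hc⟩ := IsArtinian.surjective_of_injective_endomorphism f hf ⟨a, ha⟩
  exact ⟨c, c.2, congrArg Subtype.val hc⟩

namespace Ideal

def graphMulRight (I : Ideal R) (g : R) : Submodule R (R × R) :=
  Submodule.map ((LinearMap.id).prod (mulRight R g)) I

variable {C1 C2 C12 : Ideal R} {g : R}

theorem mem_graphMulRight {p : R × R} : p ∈ C12.graphMulRight g ↔ ∃ c ∈ C12, (c, c * g) = p :=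
  Iff.rfl

theorem mem_prod_sup_graphMulRight {p : R × R} :
    p ∈ Submodule.prod C1 C2 ⊔ C12.graphMulRight g ↔
      ∃ c1 ∈ C1, ∃ c2 ∈ C2, ∃ c ∈ C12, p = (c1 + c, c2 + c * g) := by
  simp only [Submodule.mem_sup, Submodule.mem_prod, mem_graphMulRight]
  constructor
  · rintro ⟨y, ⟨hy1, hy2⟩, _, ⟨c, hc, rfl⟩, rfl⟩
    exact ⟨y.1, hy1, y.2, hy2, c, hc, rfl⟩
  · rintro ⟨c1, hc1, c2, hc2, c, hc, rfl⟩
    exact ⟨(c1, c2), ⟨hc1, hc2⟩, _, ⟨c, hc, rfl⟩, rfl⟩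

theorem disjoint_prod_graphMulRight (h : C1 ⊓ C12 = ⊥) :
    Disjoint (Submodule.prod C1 C2) (C12.graphMulRight g) := by
  rw [Submodule.disjoint_def]
  rintro _ hp ⟨c, hc, rfl⟩
  obtain rfl : c = 0 := (Submodule.disjoint_def.mp (disjoint_iff.mpr h)) c hp.1 hc
  simp

end Ideal

namespace Submodule

variable (M : Submodule R (R × R)) {C12 : Ideal R} {e g : R}

theorem prod_comap_inl_comap_inr_le :
    prod (M.comap (inl R R R)) (M.comap (inr R R R)) ≤ M := by
  rintro ⟨a, b⟩ ⟨ha, hb⟩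
  simpa using M.add_mem ha hb

variable {M}

theorem exists_forall_mem_graph (hC12 : C12 ≤ M.map (LinearMap.fst R R R)) (he : e ∈ C12)
    (hid : ∀ c ∈ C12, e * c = c) : ∃ g ∈ C12, ∀ c ∈ C12, (c, c * g) ∈ M := by
  obtain ⟨m, hm, hme : m.1 = e⟩ := hC12 he
  refine ⟨e * m.2, C12.mul_mem_right _ he, fun c hc => ?_⟩
  have hce : c * e = c := by rw [mul_comm, hid c hc]
  convert M.smul_mem c hm using 1
  ext
  · simp [hme, hce]
  · simp [← mul_assoc, hce]

theorem eq_zero_of_mem_comap_inl_inf (h1 : M.comap (inl R R R) ⊓ C12 = ⊥) {c : R}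
    (hc : c ∈ C12) (hcM : (c, 0) ∈ M) : c = 0 :=
  (Submodule.disjoint_def.mp (disjoint_iff.mpr h1)) c hcM hc

theorem comap_inr_inf_eq_bot (h1 : M.comap (inl R R R) ⊓ C12 = ⊥)
    (hg : ∀ c ∈ C12, (c, c * g) ∈ M) (hsurj : ∀ a ∈ C12, ∃ c ∈ C12, c * g = a) :
    M.comap (inr R R R) ⊓ C12 = ⊥ := by
  refine eq_bot_iff.mpr fun a ⟨haM, ha⟩ => ?_
  obtain ⟨c, hc, rfl⟩ := hsurj a ha
  have hc0 : (c, 0) ∈ M := by simpa using M.sub_mem (hg c hc) haM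
  simp [eq_zero_of_mem_comap_inl_inf h1 hc hc0]

theorem eq_prod_sup_graphMulRight
    (hsup : M.comap (inl R R R) ⊔ C12 = M.map (LinearMap.fst R R R))
    (hg : ∀ c ∈ C12, (c, c * g) ∈ M) :
    M = prod (M.comap (inl R R R)) (M.comap (inr R R R)) ⊔ C12.graphMulRight g := by
  refine le_antisymm (fun p hp => ?_)
    (sup_le (prod_comap_inl_comap_inr_le M) (map_le_iff_le_comap.mpr fun c hc => hg c hc))
  have hp1 : p.1 ∈ M.comap (inl R R R) ⊔ C12 := hsup ▸ mem_map_of_mem hp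
  obtain ⟨c1, hc1, c, hc, hsum⟩ := mem_sup.mp hp1
  have hc2 : (0, p.2 - c * g) ∈ M := by
    convert M.sub_mem (M.sub_mem hp hc1) (hg c hc) using 1
    ext <;> simp [← hsum]
  exact Ideal.mem_prod_sup_graphMulRight.mpr
    ⟨c1, hc1, p.2 - c * g, hc2, c, hc, by ext <;> simp [hsum]⟩

theorem exists_eq_prod_sup_graphMulRight [IsSemisimpleRing R] (M : Submodule R (R × R)) :
    ∃ (C1 C2 C12 : Ideal R) (e g h : R), C1 ⊓ C12 = ⊥ ∧ C2 ⊓ C12 = ⊥ ∧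
      IsIdempotentElem e ∧ C12 = Ideal.span {e} ∧ g ∈ C12 ∧ h ∈ C12 ∧ g * h = e ∧
      M = prod C1 C2 ⊔ C12.graphMulRight g := by
  obtain ⟨C12, h1, hsup⟩ := IsModularLattice.exists_disjoint_and_sup_eq
    (show M.comap (inl R R R) ≤ M.map (LinearMap.fst R R R) from fun a ha => ⟨_, ha, rfl⟩)
  rw [disjoint_iff] at h1
  obtain ⟨e, he, hspan⟩ := IsSemisimpleRing.ideal_eq_span_idempotent C12
  have heC12 : e ∈ C12 := hspan ▸ Ideal.mem_span_singleton_self e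
  have hid : ∀ c ∈ C12, e * c = c := fun c hc => he.mul_eq_self_of_mem_span_s5 (hspan ▸ hc)
  obtain ⟨g, hgC12, hg⟩ := exists_forall_mem_graph (hsup ▸ le_sup_right) heC12 hid
  have hinj : ∀ c ∈ C12, c * g = 0 → c = 0 := fun c hc hcg =>
    eq_zero_of_mem_comap_inl_inf h1 hc (hcg ▸ hg c hc)
  have hsurj := fun a (ha : a ∈ C12) => Ideal.exists_mul_eq_of_mul_right_injOn hinj ha
  obtain ⟨h, hh, hhg⟩ := hsurj e heC12
  exact ⟨_, _, C12, e, g, h, h1, comap_inr_inf_eq_bot h1 hg hsurj, he, hspan, hgC12, hh,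
    by rw [mul_comm, hhg], eq_prod_sup_graphMulRight hsup hg⟩

end Submodule

end

theorem isSemisimpleRing_FH (hcop : Nat.Coprime n (Fintype.card F)) :
    IsSemisimpleRing (FH F n) := by
  have hunit : IsUnit (n : F) := by
    have := (Nat.isCoprime_iff_coprime.mpr hcop).map (Int.castRingHom F)
    simpa [FiniteField.cast_card_eq_zero] using this
  have : NeZero (Nat.card (Zn n) : F) := ⟨by simpa using hunit.ne_zero⟩
  infer_instance

theorem goursat_structure_general (F : Type*) [Field F] [Fintype F] (n : ℕ) [NeZero n]
    (hcop : Nat.Coprime n (Fintype.card F))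
    (C : Set (FH F n × FH F n)) :
    (∃ M : Submodule (FH F n) (FH F n × FH F n), (M : Set (FH F n × FH F n)) = C) ↔
    ∃ (C1 C2 C12 : Ideal (FH F n)) (e g h : FH F n),
      C1 ⊓ C12 = ⊥ ∧ C2 ⊓ C12 = ⊥ ∧
      e ∈ C12 ∧ C12 = Ideal.span {e} ∧ (∀ c ∈ C12, e * c = c) ∧
      g ∈ C12 ∧ h ∈ C12 ∧ g * h = e ∧
      C = {p | ∃ c1 ∈ C1, ∃ c2 ∈ C2, ∃ c ∈ C12, p = (c1 + c, c2 + c * g)} ∧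
      Disjoint (Submodule.prod C1 C2) (hatSub C12 g) := by
  -- `hatSub C12 g` is `C12.graphMulRight g` by definition.
  constructor
  · rintro ⟨M, rfl⟩
    have := isSemisimpleRing_FH hcop
    obtain ⟨C1, C2, C12, e, g, h, h1, h2, he, hspan, hg, hh, hgh, rfl⟩ :=
      M.exists_eq_prod_sup_graphMulRight
    refine ⟨C1, C2, C12, e, g, h, h1, h2, hspan ▸ Ideal.mem_span_singleton_self e, hspan,
      fun c hc => he.mul_eq_self_of_mem_span_s5 (hspan ▸ hc), hg, hh, hgh,
      Set.ext fun _ => Ideal.mem_prod_sup_graphMulRight, Ideal.disjoint_prod_graphMulRight h1⟩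
  · rintro ⟨C1, C2, C12, -, g, -, -, -, -, -, -, -, -, -, rfl, -⟩
    exact ⟨Submodule.prod C1 C2 ⊔ C12.graphMulRight g,
      Set.ext fun _ => Ideal.mem_prod_sup_graphMulRight⟩

/-- Goursat-type structure theorem for 2-quasi-cyclic codes: a subset
`C ⊆ FH × FH` is an `FH`-submodule iff there are ideals `C1, C2, C12` of `FH`
with `C1 ∩ C12 = 0 = C2 ∩ C12`, and `g ∈ C12` invertible in the ring `C12`
(with identity the idempotent `e` generating `C12`), such that
`C = {(c1 + c, c2 + c·g)}`; moreover the decomposition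
`C = (C1 × C2) ⊕ Ĉ12` is direct. -/
theorem goursat_structure (F : Type*) [Field F] [Fintype F] (n : ℕ) [NeZero n]
    (hn : 1 < n) (hcop : Nat.Coprime n (Fintype.card F))
    (C : Set (FH F n × FH F n)) :
    (∃ M : Submodule (FH F n) (FH F n × FH F n), (M : Set (FH F n × FH F n)) = C) ↔
    ∃ (C1 C2 C12 : Ideal (FH F n)) (e g h : FH F n),
      C1 ⊓ C12 = ⊥ ∧ C2 ⊓ C12 = ⊥ ∧
      e ∈ C12 ∧ C12 = Ideal.span {e} ∧ (∀ c ∈ C12, e * c = c) ∧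
      g ∈ C12 ∧ h ∈ C12 ∧ g * h = e ∧
      C = {p | ∃ c1 ∈ C1, ∃ c2 ∈ C2, ∃ c ∈ C12, p = (c1 + c, c2 + c * g)} ∧
      Disjoint (Submodule.prod C1 C2) (hatSub C12 g) :=
  goursat_structure_general F n hcop C
end
end

section
/- Let C be a 2-quasi-cyclic code with Goursat data (C1, C2, C12, g). Then C is a principal FH-module (generated by a single element) if and only if C1 ∩ C2 = 0 (equivalently, since already C1 ∩ C12 = 0 = C2 ∩ C12, if and only if C1, C2, C12 have pairwise zero intersection, i.e., C has no repeated FH-composition factors). -/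
noncomputable section

variable {F : Type*} [Field F] [Fintype F] {n : ℕ} [NeZero n]

/-! Every `c ∈ C₁ ∩ C₂` can be read off a generator `v` of `C` twice, as `(c, 0) = a • v` and
`(0, c) = b • v`; then `c² = (a v₁)(b v₂) = (a v₂)(b v₁) = 0`, and `FH` is reduced, being
commutative and semisimple by Maschke's theorem. Conversely, if `C₁, C₂, C₁₂` are pairwise
orthogonal and `e₁, e₂, e₁₂` are their idempotent generators, then `(e₁ + e₁₂, e₂ + g)` generates
`C`: multiplying it by `a₁ + a₂ + c` gives `(a₁, a₂) + (c, c g)`. -/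

theorem natCast_ne_zero_of_coprime_card {K : Type*} [Field K] [Fintype K] {m : ℕ}
    (hcop : m.Coprime (Fintype.card K)) : (m : K) ≠ 0 := fun h =>
  CharP.ringChar_ne_one <| Nat.eq_one_of_dvd_coprimes hcop (ringChar.dvd h)
    (ringChar.dvd (FiniteField.cast_card_eq_zero K))

theorem isSemisimpleRing_FH_s8 {K : Type*} [Field K] [Fintype K] {m : ℕ} [NeZero m]
    (hcop : m.Coprime (Fintype.card K)) : IsSemisimpleRing (FH K m) :=
  have : NeZero (Nat.card (Zn m) : K) := ⟨by simpa using natCast_ne_zero_of_coprime_card hcop⟩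
  inferInstance

section CommRing

variable {R : Type*} [CommRing R]

theorem Ideal.exists_mem_forall_mul_eq_self [IsSemisimpleRing R] (I : Ideal R) :
    ∃ e ∈ I, ∀ c ∈ I, c * e = c := by
  obtain ⟨e, he, rfl⟩ := IsSemisimpleRing.ideal_eq_span_idempotent I
  refine ⟨e, Ideal.mem_span_singleton_self e, fun c hc => ?_⟩
  obtain ⟨a, rfl⟩ := Ideal.mem_span_singleton'.mp hc
  rw [mul_assoc, he.eq]

theorem Ideal.mul_eq_zero_of_inf_eq_bot {I J : Ideal R} (h : I ⊓ J = ⊥) {a b : R}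
    (ha : a ∈ I) (hb : b ∈ J) : a * b = 0 := by
  simpa [h] using Ideal.mul_le_inf (Ideal.mul_mem_mul ha hb)

theorem mul_eq_zero_of_mem_span_singleton {v : R × R} {a b : R}
    (ha : (a, 0) ∈ R ∙ v) (hb : (0, b) ∈ R ∙ v) : a * b = 0 := by
  obtain ⟨r, hr⟩ := Submodule.mem_span_singleton.mp ha
  obtain ⟨s, hs⟩ := Submodule.mem_span_singleton.mp hb
  simp only [Prod.smul_fst, Prod.smul_snd, smul_eq_mul, Prod.ext_iff] at hr hs
  calc a * b = (r * v.1) * (s * v.2) := by rw [hr.1, hs.2]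
    _ = (r * v.2) * (s * v.1) := by ring
    _ = 0 := by rw [hr.2, hs.1, zero_mul]

theorem Ideal.inf_eq_bot_of_prod_le_span_singleton [IsReduced R] {I J : Ideal R} {v : R × R}
    (h : Submodule.prod I J ≤ R ∙ v) : I ⊓ J = ⊥ := by
  refine eq_bot_iff.mpr fun c hc => ?_
  have hcc : c * c = 0 :=
    mul_eq_zero_of_mem_span_singleton (h ⟨hc.1, J.zero_mem⟩) (h ⟨I.zero_mem, hc.2⟩)
  exact (Submodule.mem_bot R).mpr (IsReduced.eq_zero c ⟨2, by rw [sq, hcc]⟩)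

variable {C₁ C₂ C₁₂ : Ideal R} {e₁ e₂ e₁₂ g : R}

theorem prod_le_span_singleton_of_pairwise_inf_eq_bot
    (h₁₂ : C₁ ⊓ C₂ = ⊥) (h₁ : C₁ ⊓ C₁₂ = ⊥) (h₂ : C₂ ⊓ C₁₂ = ⊥)
    (he₁ : e₁ ∈ C₁) (he₂ : e₂ ∈ C₂) (he₁₂ : e₁₂ ∈ C₁₂) (hg : g ∈ C₁₂)
    (hid₁ : ∀ c ∈ C₁, c * e₁ = c) (hid₂ : ∀ c ∈ C₂, c * e₂ = c) :
    Submodule.prod C₁ C₂ ≤ R ∙ (e₁ + e₁₂, e₂ + g) := by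
  rintro ⟨a₁, a₂⟩ ⟨ha₁, ha₂⟩
  refine Submodule.mem_span_singleton.mpr ⟨a₁ + a₂, ?_⟩
  have first : (a₁ + a₂) * (e₁ + e₁₂) = a₁ := by
    linear_combination hid₁ a₁ ha₁ + Ideal.mul_eq_zero_of_inf_eq_bot h₁ ha₁ he₁₂ +
      Ideal.mul_eq_zero_of_inf_eq_bot h₁₂ he₁ ha₂ + Ideal.mul_eq_zero_of_inf_eq_bot h₂ ha₂ he₁₂
  have second : (a₁ + a₂) * (e₂ + g) = a₂ := by
    linear_combination hid₂ a₂ ha₂ + Ideal.mul_eq_zero_of_inf_eq_bot h₁₂ ha₁ he₂ +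
      Ideal.mul_eq_zero_of_inf_eq_bot h₁ ha₁ hg + Ideal.mul_eq_zero_of_inf_eq_bot h₂ ha₂ hg
  rw [Prod.smul_mk, smul_eq_mul, smul_eq_mul, first, second]

theorem map_graph_mulRight_le_span_singleton (h₁ : C₁ ⊓ C₁₂ = ⊥) (h₂ : C₂ ⊓ C₁₂ = ⊥)
    (he₁ : e₁ ∈ C₁) (he₂ : e₂ ∈ C₂) (hid₁₂ : ∀ c ∈ C₁₂, c * e₁₂ = c) :
    Submodule.map (LinearMap.id.prod (LinearMap.mulRight R g)) C₁₂ ≤ R ∙ (e₁ + e₁₂, e₂ + g) := by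
  rintro _ ⟨c, hc, rfl⟩
  refine Submodule.mem_span_singleton.mpr ⟨c, ?_⟩
  have first : c * (e₁ + e₁₂) = c := by
    linear_combination hid₁₂ c hc + Ideal.mul_eq_zero_of_inf_eq_bot h₁ he₁ hc
  have second : c * (e₂ + g) = c * g := by
    linear_combination Ideal.mul_eq_zero_of_inf_eq_bot h₂ he₂ hc
  rw [Prod.smul_mk, smul_eq_mul, smul_eq_mul, first, second]
  rfl

theorem exists_prod_sup_map_graph_mulRight_eq_span_singleton [IsSemisimpleRing R]
    (h₁₂ : C₁ ⊓ C₂ = ⊥) (h₁ : C₁ ⊓ C₁₂ = ⊥) (h₂ : C₂ ⊓ C₁₂ = ⊥) (hg : g ∈ C₁₂) :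
    ∃ v : R × R,
      Submodule.prod C₁ C₂ ⊔ Submodule.map (LinearMap.id.prod (LinearMap.mulRight R g)) C₁₂ =
        R ∙ v := by
  obtain ⟨e₁, he₁, hid₁⟩ := C₁.exists_mem_forall_mul_eq_self
  obtain ⟨e₂, he₂, hid₂⟩ := C₂.exists_mem_forall_mul_eq_self
  obtain ⟨e₁₂, he₁₂, hid₁₂⟩ := C₁₂.exists_mem_forall_mul_eq_self
  refine ⟨(e₁ + e₁₂, e₂ + g), le_antisymm (sup_le ?_ ?_) ?_⟩
  · exact prod_le_span_singleton_of_pairwise_inf_eq_bot h₁₂ h₁ h₂ he₁ he₂ he₁₂ hg hid₁ hid₂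
  · exact map_graph_mulRight_le_span_singleton h₁ h₂ he₁ he₂ hid₁₂
  · rw [Submodule.span_singleton_le_iff_mem, Submodule.mem_sup]
    refine ⟨(e₁, e₂), ⟨he₁, he₂⟩, (e₁₂, e₁₂ * g), ⟨e₁₂, he₁₂, rfl⟩, ?_⟩
    rw [Prod.mk_add_mk, mul_comm, hid₁₂ g hg]

end CommRing

theorem principal_iff_inf_eq_bot_general (F : Type*) [Field F] [Fintype F] (n : ℕ) [NeZero n]
    (hcop : Nat.Coprime n (Fintype.card F))
    (C : Submodule (FH F n) (FH F n × FH F n))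
    (C1 C2 C12 : Ideal (FH F n)) (g : FH F n)
    (h112 : C1 ⊓ C12 = ⊥) (h212 : C2 ⊓ C12 = ⊥)
    (hg : g ∈ C12)
    (hC : C = Submodule.prod C1 C2 ⊔ hatSub C12 g) :
    (∃ v : FH F n × FH F n, C = Submodule.span (FH F n) {v}) ↔ C1 ⊓ C2 = ⊥ := by
  have := isSemisimpleRing_FH_s8 hcop
  subst hC
  constructor
  · rintro ⟨v, hv⟩
    exact Ideal.inf_eq_bot_of_prod_le_span_singleton (hv ▸ le_sup_left)
  · intro h12
    exact exists_prod_sup_map_graph_mulRight_eq_span_singleton h12 h112 h212 hg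

/-- A 2-quasi-cyclic code `C` with Goursat data `(C1, C2, C12, g)` is a principal
`FH`-module iff `C1 ∩ C2 = 0` (i.e. `C1, C2, C12` have pairwise zero intersection,
i.e. `C` has no repeated composition factors). -/
theorem principal_iff_inf_eq_bot (F : Type*) [Field F] [Fintype F] (n : ℕ) [NeZero n]
    (hn : 1 < n) (hcop : Nat.Coprime n (Fintype.card F))
    (C : Submodule (FH F n) (FH F n × FH F n))
    (C1 C2 C12 : Ideal (FH F n)) (e g h : FH F n)
    (h112 : C1 ⊓ C12 = ⊥) (h212 : C2 ⊓ C12 = ⊥)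
    (heC : e ∈ C12) (hspan : C12 = Ideal.span {e}) (hid : ∀ c ∈ C12, e * c = c)
    (hg : g ∈ C12) (hh : h ∈ C12) (hgh : g * h = e)
    (hC : C = Submodule.prod C1 C2 ⊔ hatSub C12 g) :
    (∃ v : FH F n × FH F n, C = Submodule.span (FH F n) {v}) ↔ C1 ⊓ C2 = ⊥ :=
  principal_iff_inf_eq_bot_general F n hcop C C1 C2 C12 g h112 h212 hg hC
end
end

section
/- Let C be a 2-quasi-cyclic code with Goursat data (C1, C2, C12, g). Then C = FH·(1, a) for some a ∈ FH (equivalently, C is a double circulant code) if and only if C1 + C12 = FH and C2 = 0. -/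
/-!
Both sides are read off the description of `FH·(1, a)` as the graph `{(u, u·a)}` of
multiplication by `a`. The first projection of `C` is `C1 + C12`, and `(0, x) ∈ C` for
every `x ∈ C2`; for a graph the former is `FH` and the latter forces `x = 0`. Conversely,
`C1 ∩ C12 = 0` gives `C1·g = 0`, so `C1 × 0` is itself the graph of multiplication by `g`
over `C1`, and `C` is the graph of `g` over `C1 + C12 = FH`.
-/

noncomputable section

variable {F : Type*} [Field F] [Fintype F] {n : ℕ} [NeZero n]

open Submodule

section
variable {R : Type*} [CommRing R]

theorem Ideal.mul_eq_zero_of_inf_eq_bot_s9 {I J : Ideal R} (hIJ : I ⊓ J = ⊥) {x y : R}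
    (hx : x ∈ I) (hy : y ∈ J) : x * y = 0 := by
  simpa [hIJ] using Ideal.mul_le_inf (Ideal.mul_mem_mul hx hy)

theorem span_one_mk_eq_map_id_prod_mulRight (a : R) :
    span R {((1 : R), a)} = map (LinearMap.id.prod (LinearMap.mulRight R a)) (⊤ : Ideal R) := by
  rw [← Ideal.span_singleton_one, Ideal.span, map_span, Set.image_singleton]
  simp

theorem map_fst_map_id_prod (I : Ideal R) (f : R →ₗ[R] R) :
    map (LinearMap.fst R R R) (map (LinearMap.id.prod f) I) = I := by
  rw [← map_comp, LinearMap.fst_prod, map_id]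

theorem prod_bot_eq_map_id_prod_mulRight {I J : Ideal R} (hIJ : I ⊓ J = ⊥) {g : R}
    (hg : g ∈ J) :
    prod I (⊥ : Ideal R) = map (LinearMap.id.prod (LinearMap.mulRight R g)) I := by
  ext ⟨u, v⟩
  constructor
  · rintro ⟨hu, hv : v ∈ (⊥ : Ideal R)⟩
    exact ⟨u, hu, by simp [Ideal.mul_eq_zero_of_inf_eq_bot_s9 hIJ hu hg, Ideal.mem_bot.1 hv]⟩
  · rintro ⟨w, hw, hwuv⟩
    obtain ⟨rfl, rfl⟩ : w = u ∧ w * g = v := by simpa [Prod.ext_iff] using hwuv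
    exact ⟨hw, Ideal.mul_eq_zero_of_inf_eq_bot_s9 hIJ hw hg⟩

theorem sup_eq_top_of_prod_sup_map_eq_span {I₁ I₂ J : Ideal R} {g a : R}
    (h : prod I₁ I₂ ⊔ map (LinearMap.id.prod (LinearMap.mulRight R g)) J =
      span R {((1 : R), a)}) :
    I₁ ⊔ J = ⊤ := by
  have := congrArg (map (LinearMap.fst R R R)) h
  rwa [Submodule.map_sup, prod_map_fst, map_fst_map_id_prod, span_one_mk_eq_map_id_prod_mulRight,
    map_fst_map_id_prod] at this

theorem eq_bot_of_prod_sup_map_eq_span {I₁ I₂ J : Ideal R} {g a : R}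
    (h : prod I₁ I₂ ⊔ map (LinearMap.id.prod (LinearMap.mulRight R g)) J =
      span R {((1 : R), a)}) :
    I₂ = ⊥ := by
  refine eq_bot_iff.mpr fun x hx => ?_
  have hx0 : ((0 : R), x) ∈ span R {((1 : R), a)} :=
    h ▸ mem_sup_left ⟨zero_mem _, hx⟩
  rw [span_one_mk_eq_map_id_prod_mulRight] at hx0
  obtain ⟨r, -, hr⟩ := hx0
  obtain ⟨rfl, rfl⟩ : r = 0 ∧ r * a = x := by simpa [Prod.ext_iff] using hr
  exact zero_mul a

theorem prod_bot_sup_map_eq_span {I J : Ideal R} (hsup : I ⊔ J = ⊤) (hinf : I ⊓ J = ⊥)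
    {g : R} (hg : g ∈ J) :
    prod I (⊥ : Ideal R) ⊔ map (LinearMap.id.prod (LinearMap.mulRight R g)) J =
      span R {((1 : R), g)} := by
  rw [prod_bot_eq_map_id_prod_mulRight hinf hg, ← Submodule.map_sup, hsup,
    span_one_mk_eq_map_id_prod_mulRight]

end

theorem double_circulant_iff_general (F : Type*) [Field F] (n : ℕ)
    (C : Submodule (FH F n) (FH F n × FH F n))
    (C1 C2 C12 : Ideal (FH F n)) (g : FH F n)
    (h112 : C1 ⊓ C12 = ⊥)
    (hg : g ∈ C12)
    (hC : C = Submodule.prod C1 C2 ⊔ hatSub C12 g) :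
    (∃ a : FH F n, C = Submodule.span (FH F n) {((1 : FH F n), a)}) ↔
      (C1 ⊔ C12 = ⊤ ∧ C2 = ⊥) := by
  subst hC
  constructor
  · rintro ⟨a, ha⟩
    exact ⟨sup_eq_top_of_prod_sup_map_eq_span ha, eq_bot_of_prod_sup_map_eq_span ha⟩
  · rintro ⟨hsup, rfl⟩
    exact ⟨g, prod_bot_sup_map_eq_span hsup h112 hg⟩

/-- A 2-quasi-cyclic code `C` with Goursat data `(C1, C2, C12, g)` is a double
circulant code, i.e. `C = FH·(1, a)` for some `a ∈ FH`, iff `C1 + C12 = FH`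
and `C2 = 0`. -/
theorem double_circulant_iff (F : Type*) [Field F] [Fintype F] (n : ℕ) [NeZero n]
    (hn : 1 < n) (hcop : Nat.Coprime n (Fintype.card F))
    (C : Submodule (FH F n) (FH F n × FH F n))
    (C1 C2 C12 : Ideal (FH F n)) (e g h : FH F n)
    (h112 : C1 ⊓ C12 = ⊥) (h212 : C2 ⊓ C12 = ⊥)
    (heC : e ∈ C12) (hspan : C12 = Ideal.span {e}) (hid : ∀ c ∈ C12, e * c = c)
    (hg : g ∈ C12) (hh : h ∈ C12) (hgh : g * h = e)
    (hC : C = Submodule.prod C1 C2 ⊔ hatSub C12 g) :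
    (∃ a : FH F n, C = Submodule.span (FH F n) {((1 : FH F n), a)}) ↔
      (C1 ⊔ C12 = ⊤ ∧ C2 = ⊥) :=
  double_circulant_iff_general F n C C1 C2 C12 g h112 hg hC
end
end

section
/- Let C be a 2-quasi-cyclic code with Goursat data (C1, C2, C12, g). Then C is self-dual if and only if all three of the following hold: (i) dim_F C = n and dim_F C1 = dim_F C2; (ii) ⟨C1, C1⟩ = ⟨C2, C2⟩ = ⟨C1, C12⟩ = ⟨C2, C12⟩ = 0, where ⟨·,·⟩ is the inner product on FH; (iii) C̄12 = C12 and g·ḡ = −e_{C12}. -/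
/-!
Multiplication by `b` on `FH` is adjoint to multiplication by `b̄` for the coefficientwise inner
product, so pairing two elements `(a + c, b + c g)`, `(a' + c', b' + c' g)` of `C` gives the
pairings among `C1`, `C2`, `C12` plus `⟨c, c' (1 + g ḡ)⟩`. Hence (ii) and `g ḡ = -e` make `C`
totally isotropic, and with `dim C = n` it is self-dual.

Conversely, let `C = C^⊥`. Since `C2 ∩ C12 = 0` and `g` is invertible in `C12`, `(u, 0) ∈ C` iff
`u ∈ C1`, while `(u, 0) ∈ C^⊥` iff `u ⊥ C1 + C12`; so `C1 = (C1 + C12)^⊥`, and likewise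
`C2 = (C2 + C12)^⊥`. Counting dimensions gives `2 dim C1 + dim C12 = n = 2 dim C2 + dim C12`, and
`C1 ∩ C12 = 0` shows that the form is nondegenerate on `C12`. Nondegeneracy forces
`e + g ḡ = 0`, which is orthogonal to `C12` by self-duality, and `ē = e`, whence `C̄12 = C12`.
-/

noncomputable section

variable {F : Type*} [Field F] [Fintype F] {n : ℕ} [NeZero n]

open Module
open LinearMap (BilinForm)

namespace LinearMap.BilinForm

theorem disjoint_orthogonal_of_eq_orthogonal_sup {R M : Type*} [CommSemiring R]
    [AddCommMonoid M] [Module R M] {B : BilinForm R M} (hB : B.IsRefl) {W U : Submodule R M}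
    (hWU : Disjoint W U) (h : W = B.orthogonal (W ⊔ U)) : Disjoint U (B.orthogonal U) := by
  rw [Submodule.disjoint_def]
  intro x hxU hxU'
  have hxW : x ∈ W := by
    rw [h, mem_orthogonal_iff]
    intro y hy
    obtain ⟨w, hw, u, hu, rfl⟩ := Submodule.mem_sup.1 hy
    rw [map_add, LinearMap.add_apply, hB _ _ ((h.le hw) x (Submodule.mem_sup_right hxU)),
      hxU' u hu, add_zero]
  exact Submodule.disjoint_def.1 hWU x hxW hxU

variable {K V : Type*} [Field K] [AddCommGroup V] [Module K V] [FiniteDimensional K V]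
  {B : BilinForm K V}

theorem eq_orthogonal_iff (hB : B.Nondegenerate) (W : Submodule K V) :
    W = B.orthogonal W ↔ W ≤ B.orthogonal W ∧ 2 * finrank K W = finrank K V := by
  have hcompl := finrank_orthogonal hB W
  have hle := W.finrank_le
  refine ⟨fun h => ⟨h.le, ?_⟩, fun ⟨hiso, hdim⟩ => Submodule.eq_of_le_of_finrank_le hiso ?_⟩
  · rw [← h] at hcompl
    omega
  · omega

theorem two_mul_finrank_add_finrank_eq (hB : B.Nondegenerate) {W U : Submodule K V}
    (hWU : Disjoint W U) (h : W = B.orthogonal (W ⊔ U)) :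
    2 * finrank K W + finrank K U = finrank K V := by
  have hcompl := finrank_orthogonal hB (W ⊔ U)
  have hsup := Submodule.finrank_sup_add_finrank_inf_eq W U
  have hle := (W ⊔ U).finrank_le
  rw [hWU.eq_bot, finrank_bot] at hsup
  rw [← h] at hcompl
  omega

end LinearMap.BilinForm

namespace QuasiCyclic

variable {F : Type*} [Field F] {n : ℕ}

def barAlgEquiv : FH F n ≃ₐ[F] FH F n := MonoidAlgebra.domCongr F F (MulEquiv.inv (Zn n))

theorem coeff_bar (a : FH F n) (x : Zn n) : (bar a).coeff x = a.coeff x⁻¹ := rfl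

theorem bar_eq_barAlgEquiv (a : FH F n) : bar a = barAlgEquiv a := by
  ext x
  simp [coeff_bar, barAlgEquiv]

@[simp] theorem bar_bar (a : FH F n) : bar (bar a) = a := by
  ext x
  simp [coeff_bar]

@[simp] theorem bar_mul (a b : FH F n) : bar (a * b) = bar a * bar b := by
  simp only [bar_eq_barAlgEquiv, map_mul]

@[simp] theorem bar_sub (a b : FH F n) : bar (a - b) = bar a - bar b := by
  simp only [bar_eq_barAlgEquiv, map_sub]

@[simp] theorem bar_one : bar (1 : FH F n) = 1 := by
  simp only [bar_eq_barAlgEquiv, map_one]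

theorem image_bar_eq_self {I : Ideal (FH F n)} {e : FH F n} (he : e ∈ I)
    (hid : ∀ c ∈ I, e * c = c) (hbar : bar e = e) :
    bar '' (I : Set (FH F n)) = I := by
  have hmaps : ∀ c ∈ I, bar c ∈ I := fun c hc => by
    rw [← hid c hc, bar_mul, hbar]
    exact I.mul_mem_right _ he
  exact (Set.image_subset_iff.2 hmaps).antisymm fun c hc => ⟨bar c, hmaps c hc, bar_bar c⟩

section Goursat

variable {C1 C2 C12 : Ideal (FH F n)} {e g h : FH F n}

theorem mem_prod_sup_hatSub {p : FH F n × FH F n} :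
    p ∈ Submodule.prod C1 C2 ⊔ hatSub C12 g ↔
      ∃ a ∈ C1, ∃ b ∈ C2, ∃ c ∈ C12, p = (a + c, b + c * g) := by
  simp only [Submodule.mem_sup, Submodule.mem_prod, hatSub, Submodule.mem_map,
    LinearMap.prod_apply]
  constructor
  · rintro ⟨q, ⟨ha, hb⟩, _, ⟨c, hc, rfl⟩, rfl⟩
    exact ⟨q.1, ha, q.2, hb, c, hc, rfl⟩
  · rintro ⟨a, ha, b, hb, c, hc, rfl⟩
    exact ⟨(a, b), ⟨ha, hb⟩, _, ⟨c, hc, rfl⟩, rfl⟩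

theorem eq_zero_of_mem_of_mul_eq_zero (hid : ∀ c ∈ C12, e * c = c) (hgh : g * h = e) {c : FH F n}
    (hc : c ∈ C12) (hcg : c * g = 0) : c = 0 := by
  rw [← hid c hc, ← hgh, mul_comm, ← mul_assoc, hcg, zero_mul]

theorem mul_mul_eq_self (hid : ∀ c ∈ C12, e * c = c) (hgh : g * h = e) {c : FH F n}
    (hc : c ∈ C12) : c * h * g = c := by
  rw [mul_assoc, mul_comm h, hgh, mul_comm, hid c hc]

theorem mk_zero_mem_iff (h212 : C2 ⊓ C12 = ⊥) (hid : ∀ c ∈ C12, e * c = c) (hgh : g * h = e)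
    (u : FH F n) : (u, 0) ∈ Submodule.prod C1 C2 ⊔ hatSub C12 g ↔ u ∈ C1 := by
  refine ⟨fun hu => ?_, fun hu =>
    mem_prod_sup_hatSub.2 ⟨u, hu, 0, zero_mem _, 0, zero_mem _, by simp⟩⟩
  obtain ⟨a, ha, b, hb, c, hc, hp⟩ := mem_prod_sup_hatSub.1 hu
  obtain ⟨rfl, hcg⟩ := Prod.mk.inj hp
  have hcg' : c * g ∈ C2 ⊓ C12 :=
    ⟨by rw [eq_neg_of_add_eq_zero_right hcg.symm]; exact neg_mem hb, C12.mul_mem_right _ hc⟩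
  rw [h212, Submodule.mem_bot] at hcg'
  rwa [eq_zero_of_mem_of_mul_eq_zero hid hgh hc hcg', add_zero]

theorem zero_mk_mem_iff (h112 : C1 ⊓ C12 = ⊥) (w : FH F n) :
    (0, w) ∈ Submodule.prod C1 C2 ⊔ hatSub C12 g ↔ w ∈ C2 := by
  refine ⟨fun hw => ?_, fun hw =>
    mem_prod_sup_hatSub.2 ⟨0, zero_mem _, w, hw, 0, zero_mem _, by simp⟩⟩
  obtain ⟨a, ha, b, hb, c, hc, hp⟩ := mem_prod_sup_hatSub.1 hw
  obtain ⟨hac, rfl⟩ := Prod.mk.inj hp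
  have hc' : c ∈ C1 ⊓ C12 :=
    ⟨by rw [eq_neg_of_add_eq_zero_right hac.symm]; exact neg_mem ha, hc⟩
  rw [h112, Submodule.mem_bot] at hc'
  rwa [hc', zero_mul, add_zero]

end Goursat

variable [NeZero n]

theorem innerFH_comm (a b : FH F n) : innerFH a b = innerFH b a := by
  simp only [innerFH, mul_comm]

theorem innerFH_add_left (a b c : FH F n) : innerFH (a + b) c = innerFH a c + innerFH b c := by
  simp [innerFH, add_mul, Finset.sum_add_distrib]

theorem innerFH_add_right (a b c : FH F n) : innerFH a (b + c) = innerFH a b + innerFH a c := by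
  rw [innerFH_comm, innerFH_add_left, innerFH_comm b, innerFH_comm c]

theorem innerFH_smul_left (r : F) (a b : FH F n) : innerFH (r • a) b = r * innerFH a b := by
  simp [innerFH, Finset.mul_sum, mul_assoc]

theorem innerFH_smul_right (r : F) (a b : FH F n) : innerFH a (r • b) = r * innerFH a b := by
  rw [innerFH_comm, innerFH_smul_left, innerFH_comm]

@[simp] theorem innerFH_zero_left (a : FH F n) : innerFH 0 a = 0 := by
  simp [innerFH]

@[simp] theorem innerFH_zero_right (a : FH F n) : innerFH a 0 = 0 := by
  simp [innerFH]

theorem innerFH_single_one (a : FH F n) (x : Zn n) :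
    innerFH a (MonoidAlgebra.single x 1) = a.coeff x := by
  classical
  simp [innerFH, MonoidAlgebra.coeff_single, Finsupp.single_apply]

theorem innerFH_eq_coeff_mul_bar (a b : FH F n) : innerFH a b = (a * bar b).coeff 1 := by
  simp [innerFH, MonoidAlgebra.coeff_mul_apply_left, coeff_bar, Finsupp.sum_fintype]

theorem innerFH_mul_left (a b c : FH F n) : innerFH (a * b) c = innerFH a (bar b * c) := by
  rw [innerFH_eq_coeff_mul_bar, innerFH_eq_coeff_mul_bar, bar_mul, bar_bar, mul_assoc]

theorem innerFH_mul_right (a b c : FH F n) : innerFH a (b * c) = innerFH (a * bar b) c := by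
  rw [innerFH_mul_left, bar_bar]

def innerForm : BilinForm F (FH F n) :=
  LinearMap.mk₂ F innerFH innerFH_add_left innerFH_smul_left innerFH_add_right innerFH_smul_right

theorem innerForm_apply (a b : FH F n) : innerForm a b = innerFH a b := rfl

theorem innerForm_isRefl : (innerForm : BilinForm F (FH F n)).IsRefl := fun a b h => by
  rwa [innerForm_apply, innerFH_comm]

theorem innerForm_nondegenerate : (innerForm : BilinForm F (FH F n)).Nondegenerate :=
  .ofSeparatingLeft fun a ha => by
    ext x
    rw [← innerFH_single_one]
    exact ha _

def innerForm2 : BilinForm F (FH F n × FH F n) :=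
  innerForm.compl₁₂ (LinearMap.fst F _ _) (LinearMap.fst F _ _) +
    innerForm.compl₁₂ (LinearMap.snd F _ _) (LinearMap.snd F _ _)

theorem innerForm2_apply (p q : FH F n × FH F n) : innerForm2 p q = innerFH2 p q := rfl

theorem innerFH2_comm (p q : FH F n × FH F n) : innerFH2 p q = innerFH2 q p := by
  rw [innerFH2, innerFH2, innerFH_comm p.1, innerFH_comm p.2]

theorem innerForm2_nondegenerate : (innerForm2 : BilinForm F (FH F n × FH F n)).Nondegenerate :=
  .ofSeparatingLeft fun p hp => by
    refine Prod.ext (innerForm_nondegenerate.1 _ fun a => ?_)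
      (innerForm_nondegenerate.1 _ fun a => ?_)
    · simpa [innerForm2_apply, innerFH2, innerForm_apply] using hp (a, 0)
    · simpa [innerForm2_apply, innerFH2, innerForm_apply] using hp (0, a)

theorem finrank_FH : finrank F (FH F n) = n := by
  rw [finrank_eq_card_basis (MonoidAlgebra.basis (Zn n) F)]
  simp

theorem finrank_FH_prod : finrank F (FH F n × FH F n) = 2 * n := by
  rw [Module.finrank_prod, finrank_FH, two_mul]

theorem isSelfDual_iff_eq_orthogonal (C : Submodule (FH F n) (FH F n × FH F n)) :
    IsSelfDual C ↔ C.restrictScalars F = innerForm2.orthogonal (C.restrictScalars F) := by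
  simp only [IsSelfDual, Set.ext_iff, SetLike.ext_iff, SetLike.mem_coe, Set.mem_ofPred_eq,
    Submodule.restrictScalars_mem, LinearMap.BilinForm.mem_orthogonal_iff, innerForm2_apply]
  exact forall_congr' fun v => iff_congr Iff.rfl <| forall₂_congr fun p _ => by
    rw [innerFH2_comm]

theorem inner_eq_zero_of_eq_orthogonal_sup {I J : Ideal (FH F n)}
    (h : I.restrictScalars F = innerForm.orthogonal (I.restrictScalars F ⊔ J.restrictScalars F)) :
    (∀ a ∈ I, ∀ b ∈ I, innerFH a b = 0) ∧ ∀ a ∈ I, ∀ b ∈ J, innerFH a b = 0 :=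
  ⟨fun a ha _ hb => h.le hb a (Submodule.mem_sup_left ha),
    fun a ha b hb => (innerFH_comm a b).trans (h.le ha b (Submodule.mem_sup_right hb))⟩

theorem bar_eq_self_of_disjoint_orthogonal {I : Ideal (FH F n)} {e : FH F n} (he : e ∈ I)
    (hid : ∀ c ∈ I, e * c = c)
    (hI : Disjoint (I.restrictScalars F) (innerForm.orthogonal (I.restrictScalars F))) :
    bar e = e := by
  -- `(1 - ē) e` lies in `I` and is orthogonal to `I`, since `d (1 - e) = 0` for `d ∈ I`.
  have hortho : (1 - bar e) * e ∈ innerForm.orthogonal (I.restrictScalars F) := fun d hd => by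
    rw [innerForm_apply, innerFH_mul_right, bar_sub, bar_one, bar_bar, mul_sub, mul_one,
      mul_comm d e, hid d hd, sub_self, innerFH_zero_left]
  have hfix : (1 - bar e) * e = 0 :=
    Submodule.disjoint_def.1 hI _ (I.mul_mem_left _ he) hortho
  have he_eq : e = bar e * e := by linear_combination hfix
  calc bar e = bar (bar e * e) := by rw [← he_eq]
    _ = e := by rw [bar_mul, bar_bar, mul_comm, ← he_eq]

section SelfDual

variable {C1 C2 C12 : Ideal (FH F n)} {e g h : FH F n}

theorem mk_zero_mem_orthogonal_iff (u : FH F n) :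
    (u, 0) ∈ innerForm2.orthogonal ((Submodule.prod C1 C2 ⊔ hatSub C12 g).restrictScalars F) ↔
      u ∈ innerForm.orthogonal (C1.restrictScalars F ⊔ C12.restrictScalars F) := by
  simp only [LinearMap.BilinForm.mem_orthogonal_iff, Submodule.restrictScalars_mem,
    innerForm2_apply, innerForm_apply]
  constructor
  · intro hu y hy
    obtain ⟨a, ha, c, hc, rfl⟩ := Submodule.mem_sup.1 hy
    simpa [innerFH2] using
      hu (a + c, c * g) (mem_prod_sup_hatSub.2 ⟨a, ha, 0, zero_mem _, c, hc, by rw [zero_add]⟩)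
  · intro hu p hp
    obtain ⟨a, ha, b, -, c, hc, rfl⟩ := mem_prod_sup_hatSub.1 hp
    simpa [innerFH2] using hu _ (Submodule.add_mem_sup ha hc)

theorem zero_mk_mem_orthogonal_iff (hid : ∀ c ∈ C12, e * c = c) (hgh : g * h = e)
    (w : FH F n) :
    (0, w) ∈ innerForm2.orthogonal ((Submodule.prod C1 C2 ⊔ hatSub C12 g).restrictScalars F) ↔
      w ∈ innerForm.orthogonal (C2.restrictScalars F ⊔ C12.restrictScalars F) := by
  simp only [LinearMap.BilinForm.mem_orthogonal_iff, Submodule.restrictScalars_mem,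
    innerForm2_apply, innerForm_apply]
  constructor
  · intro hw y hy
    obtain ⟨b, hb, c, hc, rfl⟩ := Submodule.mem_sup.1 hy
    have := hw _ (mem_prod_sup_hatSub.2
      ⟨0, zero_mem _, b, hb, c * h, C12.mul_mem_right _ hc, rfl⟩)
    rwa [innerFH2, mul_mul_eq_self hid hgh hc, innerFH_zero_right, zero_add] at this
  · intro hw p hp
    obtain ⟨a, -, b, hb, c, hc, rfl⟩ := mem_prod_sup_hatSub.1 hp
    simpa [innerFH2] using hw _ (Submodule.add_mem_sup hb (C12.mul_mem_right g hc))

theorem innerFH2_mk_mul (c c' : FH F n) :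
    innerFH2 (c, c * g) (c', c' * g) = innerFH c (c' * (1 + g * bar g)) := by
  rw [innerFH2, innerFH_mul_left, ← innerFH_add_right]
  congr 1
  ring

theorem le_orthogonal_of_inner_eq_zero (hid : ∀ c ∈ C12, e * c = c)
    (h11 : ∀ a ∈ C1, ∀ b ∈ C1, innerFH a b = 0) (h22 : ∀ a ∈ C2, ∀ b ∈ C2, innerFH a b = 0)
    (h1 : ∀ a ∈ C1, ∀ b ∈ C12, innerFH a b = 0) (h2 : ∀ a ∈ C2, ∀ b ∈ C12, innerFH a b = 0)
    (hgg : g * bar g = -e) :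
    (Submodule.prod C1 C2 ⊔ hatSub C12 g).restrictScalars F ≤
      innerForm2.orthogonal ((Submodule.prod C1 C2 ⊔ hatSub C12 g).restrictScalars F) := by
  have hcross : ∀ a ∈ C1, ∀ b ∈ C2, ∀ c ∈ C12, innerFH2 (a, b) (c, c * g) = 0 :=
    fun a ha b hb c hc => by
      rw [innerFH2, h1 a ha c hc, h2 b hb _ (C12.mul_mem_right g hc), add_zero]
  have hhat : ∀ c, ∀ c' ∈ C12, innerFH2 (c, c * g) (c', c' * g) = 0 := fun c c' hc' => by
    rw [innerFH2_mk_mul, mul_add, mul_one, hgg, mul_neg, mul_comm, hid c' hc', add_neg_cancel,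
      innerFH_zero_right]
  intro q hq p hp
  obtain ⟨a, ha, b, hb, c, hc, rfl⟩ := mem_prod_sup_hatSub.1 hp
  obtain ⟨a', ha', b', hb', c', hc', rfl⟩ := mem_prod_sup_hatSub.1 hq
  simp only [← Prod.mk_add_mk, map_add, LinearMap.add_apply, innerForm2_apply]
  rw [hcross a ha b hb c' hc', innerFH2_comm (c, _), hcross a' ha' b' hb' c hc, hhat c c' hc',
    innerFH2, h11 a ha a' ha', h22 b hb b' hb']
  simp

theorem mul_bar_eq_neg_of_eq_orthogonal (heC : e ∈ C12) (hid : ∀ c ∈ C12, e * c = c)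
    (hg : g ∈ C12)
    (hsd : (Submodule.prod C1 C2 ⊔ hatSub C12 g).restrictScalars F =
      innerForm2.orthogonal ((Submodule.prod C1 C2 ⊔ hatSub C12 g).restrictScalars F))
    (hnd : Disjoint (C12.restrictScalars F) (innerForm.orthogonal (C12.restrictScalars F))) :
    g * bar g = -e := by
  have hmem : ∀ c ∈ C12, (c, c * g) ∈ Submodule.prod C1 C2 ⊔ hatSub C12 g := fun c hc =>
    mem_prod_sup_hatSub.2 ⟨0, zero_mem _, 0, zero_mem _, c, hc, by simp⟩
  have hortho : e + g * bar g ∈ innerForm.orthogonal (C12.restrictScalars F) := fun c hc => by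
    have := hsd.le (hmem e heC) _ (hmem c hc)
    rwa [innerForm2_apply, innerFH2_mk_mul, mul_add, mul_one, ← mul_assoc, hid g hg] at this
  exact eq_neg_of_add_eq_zero_right <|
    Submodule.disjoint_def.1 hnd _ (C12.add_mem heC (C12.mul_mem_right _ hg)) hortho

theorem fst_ideal_eq_orthogonal_sup (h212 : C2 ⊓ C12 = ⊥) (hid : ∀ c ∈ C12, e * c = c)
    (hgh : g * h = e)
    (hsd : (Submodule.prod C1 C2 ⊔ hatSub C12 g).restrictScalars F =
      innerForm2.orthogonal ((Submodule.prod C1 C2 ⊔ hatSub C12 g).restrictScalars F)) :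
    C1.restrictScalars F = innerForm.orthogonal (C1.restrictScalars F ⊔ C12.restrictScalars F) := by
  ext u
  rw [← mk_zero_mem_orthogonal_iff, ← hsd, Submodule.restrictScalars_mem,
    Submodule.restrictScalars_mem, mk_zero_mem_iff h212 hid hgh]

theorem snd_ideal_eq_orthogonal_sup (h112 : C1 ⊓ C12 = ⊥) (hid : ∀ c ∈ C12, e * c = c)
    (hgh : g * h = e)
    (hsd : (Submodule.prod C1 C2 ⊔ hatSub C12 g).restrictScalars F =
      innerForm2.orthogonal ((Submodule.prod C1 C2 ⊔ hatSub C12 g).restrictScalars F)) :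
    C2.restrictScalars F = innerForm.orthogonal (C2.restrictScalars F ⊔ C12.restrictScalars F) := by
  ext w
  rw [← zero_mk_mem_orthogonal_iff hid hgh, ← hsd, Submodule.restrictScalars_mem,
    Submodule.restrictScalars_mem, zero_mk_mem_iff h112]

end SelfDual

end QuasiCyclic

open QuasiCyclic LinearMap.BilinForm

theorem self_dual_iff_general (F : Type*) [Field F] (n : ℕ) [NeZero n]
    (C : Submodule (FH F n) (FH F n × FH F n))
    (C1 C2 C12 : Ideal (FH F n)) (e g h : FH F n)
    (h112 : C1 ⊓ C12 = ⊥) (h212 : C2 ⊓ C12 = ⊥)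
    (heC : e ∈ C12) (hid : ∀ c ∈ C12, e * c = c)
    (hg : g ∈ C12) (hgh : g * h = e)
    (hC : C = Submodule.prod C1 C2 ⊔ hatSub C12 g) :
    IsSelfDual C ↔
      ((Module.finrank F C = n ∧ Module.finrank F C1 = Module.finrank F C2) ∧
       ((∀ a ∈ C1, ∀ b ∈ C1, innerFH a b = 0) ∧
        (∀ a ∈ C2, ∀ b ∈ C2, innerFH a b = 0) ∧
        (∀ a ∈ C1, ∀ b ∈ C12, innerFH a b = 0) ∧
        (∀ a ∈ C2, ∀ b ∈ C12, innerFH a b = 0)) ∧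
       (bar '' (C12 : Set (FH F n)) = (C12 : Set (FH F n)) ∧ g * bar g = -e)) := by
  subst hC
  rw [isSelfDual_iff_eq_orthogonal]
  constructor
  · intro hsd
    have hdim := ((eq_orthogonal_iff innerForm2_nondegenerate _).1 hsd).2
    rw [finrank_FH_prod] at hdim
    have hC1 := fst_ideal_eq_orthogonal_sup h212 hid hgh hsd
    have hC2 := snd_ideal_eq_orthogonal_sup h112 hid hgh hsd
    have hdisj1 := (Submodule.disjoint_restrictScalars_iff F).2 (disjoint_iff.2 h112)
    have hdisj2 := (Submodule.disjoint_restrictScalars_iff F).2 (disjoint_iff.2 h212)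
    have hnd := disjoint_orthogonal_of_eq_orthogonal_sup innerForm_isRefl hdisj1 hC1
    have hdim1 := two_mul_finrank_add_finrank_eq innerForm_nondegenerate hdisj1 hC1
    have hdim2 := two_mul_finrank_add_finrank_eq innerForm_nondegenerate hdisj2 hC2
    rw [finrank_FH] at hdim1 hdim2
    obtain ⟨h11, h1⟩ := inner_eq_zero_of_eq_orthogonal_sup hC1
    obtain ⟨h22, h2⟩ := inner_eq_zero_of_eq_orthogonal_sup hC2
    refine ⟨⟨Nat.eq_of_mul_eq_mul_left two_pos hdim, ?_⟩, ⟨h11, h22, h1, h2⟩,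
      image_bar_eq_self heC hid (bar_eq_self_of_disjoint_orthogonal heC hid hnd),
      mul_bar_eq_neg_of_eq_orthogonal heC hid hg hsd hnd⟩
    change finrank F (C1.restrictScalars F) = finrank F (C2.restrictScalars F)
    omega
  · rintro ⟨⟨hdim, -⟩, ⟨h11, h22, h1, h2⟩, -, hgg⟩
    refine (eq_orthogonal_iff innerForm2_nondegenerate _).2
      ⟨le_orthogonal_of_inner_eq_zero hid h11 h22 h1 h2 hgg, ?_⟩
    rw [finrank_FH_prod]
    exact congrArg (2 * ·) hdim

/-- A 2-quasi-cyclic code `C` with Goursat data `(C1, C2, C12, g)` is self-dual iff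
(i) `dim_F C = n` and `dim_F C1 = dim_F C2`;
(ii) `⟨C1,C1⟩ = ⟨C2,C2⟩ = ⟨C1,C12⟩ = ⟨C2,C12⟩ = 0`;
(iii) `C̄12 = C12` and `g·ḡ = −e_{C12}`. -/
theorem self_dual_iff (F : Type*) [Field F] [Fintype F] (n : ℕ) [NeZero n]
    (hn : 1 < n) (hcop : Nat.Coprime n (Fintype.card F))
    (C : Submodule (FH F n) (FH F n × FH F n))
    (C1 C2 C12 : Ideal (FH F n)) (e g h : FH F n)
    (h112 : C1 ⊓ C12 = ⊥) (h212 : C2 ⊓ C12 = ⊥)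
    (heC : e ∈ C12) (hspan : C12 = Ideal.span {e}) (hid : ∀ c ∈ C12, e * c = c)
    (hg : g ∈ C12) (hh : h ∈ C12) (hgh : g * h = e)
    (hC : C = Submodule.prod C1 C2 ⊔ hatSub C12 g) :
    IsSelfDual C ↔
      ((Module.finrank F C = n ∧ Module.finrank F C1 = Module.finrank F C2) ∧
       ((∀ a ∈ C1, ∀ b ∈ C1, innerFH a b = 0) ∧
        (∀ a ∈ C2, ∀ b ∈ C2, innerFH a b = 0) ∧
        (∀ a ∈ C1, ∀ b ∈ C12, innerFH a b = 0) ∧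
        (∀ a ∈ C2, ∀ b ∈ C12, innerFH a b = 0)) ∧
       (bar '' (C12 : Set (FH F n)) = (C12 : Set (FH F n)) ∧ g * bar g = -e)) :=
  self_dual_iff_general F n C C1 C2 C12 e g h h112 h212 heC hid hg hgh hC
end
end

section
/- Suppose char F is odd. Let C be a 2-quasi-cyclic code with Goursat data (C1, C2, C12, g). Then C is a consta-dihedral code (i.e., C is invariant under the map (a, a') ↦ (−ā', ā)) if and only if C̄1 = C2, C̄12 = C12, and ḡ·g = −e_{C12}. -/
noncomputable section

variable {F : Type*} [Field F] [Fintype F] {n : ℕ} [NeZero n]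

/-! The argument works over any commutative ring `R` with an involutive ring endomorphism `σ`
(here `bar`), for the map `τ (a, a') = (-σ a', σ a)`. If `C` is `τ`-invariant, `τ` exchanges the
parts `C1 × 0` and `0 × C2` of `C`, so `σ C1 = C2`. Next `τ (e, g) = (-σ g, σ e) ∈ C` puts the
idempotent `σ e` into `C2 + C12`; as `σ e` annihilates `C2 = σ C1` (because `e C1 = 0`), it lies in
`C12`; as `e` is the identity of `C12`, `σ e = e σ e`, and applying `σ` gives `e = σ e e`, so
`σ e = e`. Hence `σ C12 = C12`, and `(-σ g, e) ∈ Ĉ12` forces `e = -σ g * g`. Conversely, the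
three conditions give explicit Goursat coordinates for `τ (c1 + c, c2 + c g)`. -/

namespace Function.Involutive

variable {α : Type*} {f : α → α} {A B : Set α}

theorem image_eq_of_mapsTo (hf : f.Involutive) (hAB : Set.MapsTo f A B)
    (hBA : Set.MapsTo f B A) : f '' A = B :=
  hAB.image_subset.antisymm fun b hb => ⟨f b, hBA hb, hf b⟩

theorem mapsTo_of_image_eq (hf : f.Involutive) (h : f '' A = B) : Set.MapsTo f B A :=
  fun b hb => by
    obtain ⟨a, ha, rfl⟩ := h ▸ hb
    rwa [hf a]

end Function.Involutive

section GoursatCode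

variable {R : Type*} [CommRing R]

/-- The 2-quasi-cyclic code `(C1 × C2) ⊕ Ĉ12` with Goursat data `(C1, C2, C12, g)`. -/
def goursatCode (C1 C2 C12 : Ideal R) (g : R) : Submodule R (R × R) :=
  Submodule.prod C1 C2 ⊔ Submodule.map (LinearMap.prod LinearMap.id (LinearMap.mulRight R g)) C12

def IsTwistInvariant (σ : R →+* R) (C : Submodule R (R × R)) : Prop :=
  ∀ p ∈ C, (-σ p.2, σ p.1) ∈ C

variable {C1 C2 C12 I J : Ideal R} {a b e g h x : R}

theorem Ideal.mul_eq_zero_of_disjoint (hIJ : Disjoint I J) (ha : a ∈ I) (hb : b ∈ J) :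
    a * b = 0 :=
  Submodule.disjoint_def.1 hIJ _ (I.mul_mem_right b ha) (J.mul_mem_left a hb)

theorem Ideal.mem_of_isIdempotentElem_of_mem_sup (hx : IsIdempotentElem x) (hxIJ : x ∈ I ⊔ J)
    (hann : ∀ a ∈ I, x * a = 0) : x ∈ J := by
  obtain ⟨a, ha, b, hb, rfl⟩ := Submodule.mem_sup.1 hxIJ
  rw [← hx.eq, mul_add, hann a ha, zero_add]
  exact J.mul_mem_left _ hb

theorem mem_goursatCode {p : R × R} : p ∈ goursatCode C1 C2 C12 g ↔
    ∃ c1 ∈ C1, ∃ c2 ∈ C2, ∃ c ∈ C12, p = (c1 + c, c2 + c * g) := by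
  simp only [goursatCode, Submodule.mem_sup, Submodule.mem_prod, Submodule.mem_map]
  constructor
  · rintro ⟨y, ⟨hy1, hy2⟩, _, ⟨c, hc, rfl⟩, rfl⟩
    exact ⟨y.1, hy1, y.2, hy2, c, hc, rfl⟩
  · rintro ⟨c1, hc1, c2, hc2, c, hc, rfl⟩
    exact ⟨(c1, c2), ⟨hc1, hc2⟩, (c, c * g), ⟨c, hc, rfl⟩, rfl⟩

theorem snd_mem_sup_of_mem_goursatCode {p : R × R} (hp : p ∈ goursatCode C1 C2 C12 g) :
    p.2 ∈ C2 ⊔ C12 := by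
  obtain ⟨c1, -, c2, hc2, c, hc, rfl⟩ := mem_goursatCode.1 hp
  exact Submodule.add_mem_sup hc2 (C12.mul_mem_right g hc)

theorem mem_of_mk_zero_mem_goursatCode (h2 : Disjoint C2 C12) (he : ∀ c ∈ C12, e * c = c)
    (hgh : g * h = e) (ha : (a, 0) ∈ goursatCode C1 C2 C12 g) : a ∈ C1 := by
  obtain ⟨c1, hc1, c2, hc2, c, hc, heq⟩ := mem_goursatCode.1 ha
  simp only [Prod.mk.injEq] at heq
  have hcg : c * g = 0 := Submodule.disjoint_def.1 h2 _
    (by rw [eq_neg_of_add_eq_zero_right heq.2.symm]; exact neg_mem hc2) (C12.mul_mem_right g hc)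
  have hc0 : c = 0 := by rw [← he c hc, ← hgh]; linear_combination h * hcg
  rwa [heq.1, hc0, add_zero]

theorem mem_of_zero_mk_mem_goursatCode (h1 : Disjoint C1 C12)
    (hb : (0, b) ∈ goursatCode C1 C2 C12 g) : b ∈ C2 := by
  obtain ⟨c1, hc1, c2, hc2, c, hc, heq⟩ := mem_goursatCode.1 hb
  simp only [Prod.mk.injEq] at heq
  have hc0 : c = 0 := Submodule.disjoint_def.1 h1.symm _ hc
    (by rw [eq_neg_of_add_eq_zero_right heq.1.symm]; exact neg_mem hc1)
  rwa [heq.2, hc0, zero_mul, add_zero]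

theorem eq_mul_of_mk_mem_goursatCode (h1 : Disjoint C1 C12) (h2 : Disjoint C2 C12)
    (ha : a ∈ C12) (hb : b ∈ C12) (hab : (a, b) ∈ goursatCode C1 C2 C12 g) : b = a * g := by
  obtain ⟨c1, hc1, c2, hc2, c, hc, heq⟩ := mem_goursatCode.1 hab
  simp only [Prod.mk.injEq] at heq
  have hc1' : c1 = 0 := Submodule.disjoint_def.1 h1 _ hc1
    (by rw [eq_sub_of_add_eq heq.1.symm]; exact sub_mem ha hc)
  have hc2' : c2 = 0 := Submodule.disjoint_def.1 h2 _ hc2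
    (by rw [eq_sub_of_add_eq heq.2.symm]; exact sub_mem hb (C12.mul_mem_right g hc))
  rw [heq.1, heq.2, hc1', hc2', zero_add, zero_add]

variable {σ : R →+* R}

theorem map_eq_self_of_map_mem (hσ : Function.Involutive σ) (he : ∀ c ∈ C12, e * c = c)
    (hσe : σ e ∈ C12) : σ e = e := by
  have hσe' : e = σ e * e :=
    calc e = σ (σ e) := (hσ e).symm
      _ = σ (e * σ e) := by rw [he _ hσe]
      _ = σ e * e := by rw [map_mul, hσ e]
  calc σ e = e * σ e := (he _ hσe).symm
    _ = σ e * e := mul_comm _ _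
    _ = e := hσe'.symm

theorem image_eq_self_of_map_eq_self (hσ : Function.Involutive σ) (heC : e ∈ C12)
    (he : ∀ c ∈ C12, e * c = c) (hσe : σ e = e) : σ '' C12 = C12 :=
  have hmaps : Set.MapsTo σ C12 C12 := fun a ha => by
    rw [← he a ha, map_mul, hσe]
    exact C12.mul_mem_right _ heC
  hσ.image_eq_of_mapsTo hmaps hmaps

theorem image_eq_of_isTwistInvariant (hσ : Function.Involutive σ) (h1 : Disjoint C1 C12)
    (h2 : Disjoint C2 C12) (he : ∀ c ∈ C12, e * c = c) (hgh : g * h = e)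
    (hinv : IsTwistInvariant σ (goursatCode C1 C2 C12 g)) : σ '' C1 = C2 := by
  refine hσ.image_eq_of_mapsTo (fun a ha => ?_) (fun b hb => ?_)
  · have := hinv (a, 0) (mem_goursatCode.2 ⟨a, ha, 0, zero_mem _, 0, zero_mem _, by simp⟩)
    simp only [map_zero, neg_zero] at this
    exact mem_of_zero_mk_mem_goursatCode h1 this
  · have := hinv (0, b) (mem_goursatCode.2 ⟨0, zero_mem _, b, hb, 0, zero_mem _, by simp⟩)
    simp only [map_zero] at this
    exact neg_mem_iff.1 (mem_of_mk_zero_mem_goursatCode h2 he hgh this)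

theorem mk_mem_goursatCode_of_isTwistInvariant (he : ∀ c ∈ C12, e * c = c) (heC : e ∈ C12)
    (hg : g ∈ C12) (hinv : IsTwistInvariant σ (goursatCode C1 C2 C12 g)) :
    (-σ g, σ e) ∈ goursatCode C1 C2 C12 g :=
  hinv (e, g) (mem_goursatCode.2 ⟨0, zero_mem _, 0, zero_mem _, e, heC, by simp [he g hg]⟩)

theorem map_eq_self_of_isTwistInvariant (hσ : Function.Involutive σ) (h1 : Disjoint C1 C12)
    (hC2 : Set.MapsTo σ C2 C1) (heC : e ∈ C12) (he : ∀ c ∈ C12, e * c = c) (hg : g ∈ C12)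
    (hinv : IsTwistInvariant σ (goursatCode C1 C2 C12 g)) : σ e = e := by
  have hsup : σ e ∈ C2 ⊔ C12 :=
    snd_mem_sup_of_mem_goursatCode (mk_mem_goursatCode_of_isTwistInvariant he heC hg hinv)
  have hann : ∀ a ∈ C2, σ e * a = 0 := fun a ha => by
    rw [← hσ a, ← map_mul, Ideal.mul_eq_zero_of_disjoint h1.symm heC (hC2 ha), map_zero]
  have hidem : IsIdempotentElem (σ e) := (show IsIdempotentElem e from he e heC).map σ
  exact map_eq_self_of_map_mem hσ he (Ideal.mem_of_isIdempotentElem_of_mem_sup hidem hsup hann)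

theorem isTwistInvariant_goursatCode (hσ : Function.Involutive σ) (he : ∀ c ∈ C12, e * c = c)
    (hC1 : σ '' C1 = C2) (hC12 : σ '' C12 = C12) (hgg : σ g * g = -e) :
    IsTwistInvariant σ (goursatCode C1 C2 C12 g) := by
  rintro _ hp
  obtain ⟨c1, hc1, c2, hc2, c, hc, rfl⟩ := mem_goursatCode.1 hp
  have hσc : σ c ∈ C12 := hC12.subset ⟨c, hc, rfl⟩
  refine mem_goursatCode.2 ⟨-σ c2, neg_mem (hσ.mapsTo_of_image_eq hC1 hc2),
    σ c1, hC1.subset ⟨c1, hc1, rfl⟩, -(σ c * σ g), neg_mem (C12.mul_mem_right _ hσc), ?_⟩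
  have hσcg : -(σ c * σ g) * g = σ c := by
    rw [neg_mul, mul_assoc, hgg, mul_neg, neg_neg, mul_comm, he _ hσc]
  simp only [map_add, map_mul, hσcg, neg_add]

theorem isTwistInvariant_goursatCode_iff (hσ : Function.Involutive σ) (h1 : Disjoint C1 C12)
    (h2 : Disjoint C2 C12) (heC : e ∈ C12) (he : ∀ c ∈ C12, e * c = c) (hg : g ∈ C12)
    (hgh : g * h = e) :
    IsTwistInvariant σ (goursatCode C1 C2 C12 g) ↔
      σ '' C1 = C2 ∧ σ '' C12 = C12 ∧ σ g * g = -e := by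
  refine ⟨fun hinv => ?_, fun ⟨hC1, hC12, hgg⟩ => isTwistInvariant_goursatCode hσ he hC1 hC12 hgg⟩
  have hC1 : σ '' C1 = C2 := image_eq_of_isTwistInvariant hσ h1 h2 he hgh hinv
  have hσe : σ e = e :=
    map_eq_self_of_isTwistInvariant hσ h1 (hσ.mapsTo_of_image_eq hC1) heC he hg hinv
  have hC12 : σ '' C12 = C12 := image_eq_self_of_map_eq_self hσ heC he hσe
  have hσg : -σ g ∈ C12 := neg_mem (hC12.subset ⟨g, hg, rfl⟩)
  have hmem := mk_mem_goursatCode_of_isTwistInvariant he heC hg hinv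
  rw [hσe] at hmem
  refine ⟨hC1, hC12, ?_⟩
  rw [eq_mul_of_mk_mem_goursatCode h1 h2 hσg heC hmem, neg_mul, neg_neg]

end GoursatCode

section Bar

variable {K : Type*} [Field K] {m : ℕ}

def barRingHom : FH K m →+* FH K m :=
  (MonoidAlgebra.mapDomainRingEquiv K (MulEquiv.inv (Zn m))).toRingHom

theorem coe_barRingHom : ⇑(barRingHom : FH K m →+* FH K m) = bar := by
  funext a
  ext x
  simp [barRingHom, bar, MonoidAlgebra.coeff_mapDomainRingEquiv]

theorem bar_involutive : Function.Involutive (bar : FH K m → FH K m) := fun a => by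
  ext x
  simp [bar]

end Bar

theorem consta_dihedral_iff_general (F : Type*) [Field F] (n : ℕ)
    (C : Submodule (FH F n) (FH F n × FH F n))
    (C1 C2 C12 : Ideal (FH F n)) (e g h : FH F n)
    (h112 : C1 ⊓ C12 = ⊥) (h212 : C2 ⊓ C12 = ⊥)
    (heC : e ∈ C12) (hid : ∀ c ∈ C12, e * c = c)
    (hg : g ∈ C12) (hgh : g * h = e)
    (hC : C = Submodule.prod C1 C2 ⊔ hatSub C12 g) :
    IsConstaDihedral C ↔
      (bar '' (C1 : Set (FH F n)) = (C2 : Set (FH F n)) ∧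
       bar '' (C12 : Set (FH F n)) = (C12 : Set (FH F n)) ∧
       bar g * g = -e) := by
  subst hC
  have hσ : Function.Involutive (barRingHom : FH F n →+* FH F n) := by
    rw [coe_barRingHom]
    exact bar_involutive
  have key := isTwistInvariant_goursatCode_iff hσ (disjoint_iff.2 h112) (disjoint_iff.2 h212)
    heC hid hg hgh
  unfold IsTwistInvariant at key
  rw [coe_barRingHom] at key
  exact key

/-- (char F odd.) A 2-quasi-cyclic code `C` with Goursat data `(C1, C2, C12, g)` is
a consta-dihedral code iff `C̄1 = C2`, `C̄12 = C12`, and `ḡ·g = −e_{C12}`. -/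
theorem consta_dihedral_iff (F : Type*) [Field F] [Fintype F] (n : ℕ) [NeZero n]
    (hn : 1 < n) (hcop : Nat.Coprime n (Fintype.card F))
    (hchar : ringChar F ≠ 2)
    (C : Submodule (FH F n) (FH F n × FH F n))
    (C1 C2 C12 : Ideal (FH F n)) (e g h : FH F n)
    (h112 : C1 ⊓ C12 = ⊥) (h212 : C2 ⊓ C12 = ⊥)
    (heC : e ∈ C12) (hspan : C12 = Ideal.span {e}) (hid : ∀ c ∈ C12, e * c = c)
    (hg : g ∈ C12) (hh : h ∈ C12) (hgh : g * h = e)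
    (hC : C = Submodule.prod C1 C2 ⊔ hatSub C12 g) :
    IsConstaDihedral C ↔
      (bar '' (C1 : Set (FH F n)) = (C2 : Set (FH F n)) ∧
       bar '' (C12 : Set (FH F n)) = (C12 : Set (FH F n)) ∧
       bar g * g = -e) :=
  consta_dihedral_iff_general F n C C1 C2 C12 e g h h112 h212 heC hid hg hgh hC
end
end
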